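/- Let (X,ℰ) be a uniformly locally finite coarse space whose coarse structure is generated by a single entourage. Then there is a finitely generated group Γ acting on X whose Schreier coarse structure equals ℰ. -/
import Mathlib


/-- A coarse structure on `X`: a downward closed, directed collection of subsets of
`X × X` containing the diagonal, closed under composition and inverse. -/
def IsCoarseStructure {X : Type*} (𝓔 : Set (Set (X × X))) : Prop :=
  (∀ A ∈ 𝓔, ∀ B ⊆ A, B ∈ 𝓔) ∧
  (∀ A ∈ 𝓔, ∀ B ∈ 𝓔, ∃ C ∈ 𝓔, A ⊆ C ∧ B ⊆ C) ∧
  {p : X × X | p.1 = p.2} ∈ 𝓔 ∧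
  (∀ A ∈ 𝓔, ∀ B ∈ 𝓔, {p : X × X | ∃ y, (p.1, y) ∈ A ∧ (y, p.2) ∈ B} ∈ 𝓔) ∧
  (∀ A ∈ 𝓔, {p : X × X | (p.2, p.1) ∈ A} ∈ 𝓔)

lemma IsCoarseStructure.union_mem {X : Type*} {𝓕 : Set (Set (X × X))}
    (h : IsCoarseStructure 𝓕) {A B : Set (X × X)} (hA : A ∈ 𝓕) (hB : B ∈ 𝓕) :
    A ∪ B ∈ 𝓕 := by
  obtain ⟨C, hC, hAC, hBC⟩ := h.2.1 A hA B hB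
  exact h.1 C hC _ (Set.union_subset hAC hBC)

lemma IsCoarseStructure.biUnion_mem {X ι : Type*} {𝓕 : Set (Set (X × X))}
    (h : IsCoarseStructure 𝓕) (s : Finset ι) (f : ι → Set (X × X))
    (hf : ∀ i ∈ s, f i ∈ 𝓕) : (⋃ i ∈ s, f i) ∈ 𝓕 := by
  classical
  induction s using Finset.induction with
  | empty =>
    have : (⋃ i ∈ (∅ : Finset ι), f i) = (∅ : Set (X × X)) := by simp
    rw [this]
    exact h.1 _ h.2.2.1 ∅ (Set.empty_subset _)
  | @insert a s ha ih =>
    rw [Finset.set_biUnion_insert]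
    exact h.union_mem (hf a (Finset.mem_insert_self a s))
      (ih fun i hi => hf i (Finset.mem_insert_of_mem hi))

/-- Edge-coloring lemma: a symmetric reflexive relation of degree at most `m`
is covered by the graphs of `2m+1` involutive permutations (together with the
diagonal). -/
lemma exists_perms_covering {X : Type*} (E : Set (X × X))
    (hsym : ∀ p ∈ E, (p.2, p.1) ∈ E)
    (m : ℕ)
    (hfin : ∀ x : X, {y | (y, x) ∈ E}.Finite)
    (hcard : ∀ x : X, {y | (y, x) ∈ E}.ncard ≤ m) :
    ∃ π : Fin (2 * m + 1) → Equiv.Perm X,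
      (∀ k, ∀ y, (π k) y = y ∨ ((π k) y, y) ∈ E) ∧
      (∀ p ∈ E, p.1 = p.2 ∨ ∃ k, (π k) p.2 = p.1) := by
  classical
  set N : ℕ := 2 * m + 1 with hN
  -- admissible partial edge colorings
  set 𝒞 : Set (Set (X × X × Fin N)) :=
    {C | (∀ t ∈ C, (t.1, t.2.1) ∈ E ∧ t.1 ≠ t.2.1) ∧
         (∀ t ∈ C, (t.2.1, t.1, t.2.2) ∈ C) ∧
         (∀ x y y' k, (x, y, k) ∈ C → (x, y', k) ∈ C → y = y') ∧
         (∀ x y k k', (x, y, k) ∈ C → (x, y, k') ∈ C → k = k')} with h𝒞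
  have hzorn : ∃ M, Maximal (· ∈ 𝒞) M := by
    apply zorn_subset
    intro c hc hchain
    refine ⟨⋃₀ c, ?_, fun s hs => Set.subset_sUnion_of_mem hs⟩
    constructor
    · rintro t ⟨s, hs, hts⟩
      exact (hc hs).1 t hts
    refine ⟨?_, ?_, ?_⟩
    · rintro t ⟨s, hs, hts⟩
      exact ⟨s, hs, (hc hs).2.1 t hts⟩
    · rintro x y y' k ⟨s, hs, hin⟩ ⟨s', hs', hin'⟩
      rcases hchain.total hs hs' with hss | hss
      · exact (hc hs').2.2.1 x y y' k (hss hin) hin'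
      · exact (hc hs).2.2.1 x y y' k hin (hss hin')
    · rintro x y k k' ⟨s, hs, hin⟩ ⟨s', hs', hin'⟩
      rcases hchain.total hs hs' with hss | hss
      · exact (hc hs').2.2.2 x y k k' (hss hin) hin'
      · exact (hc hs).2.2.2 x y k k' hin (hss hin')
  obtain ⟨M, hM⟩ := hzorn
  have hM𝒞 : M ∈ 𝒞 := hM.prop
  obtain ⟨hMa, hMb, hMc, hMd⟩ := hM𝒞
  -- totality of the maximal coloring
  have htotal : ∀ x y : X, (x, y) ∈ E → x ≠ y → ∃ k, (x, y, k) ∈ M := by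
    intro x y hxy hne
    by_contra hno
    push_neg at hno
    -- colors used at x and at y
    set K₁ : Set (Fin N) := {k | ∃ z, (x, z, k) ∈ M} with hK₁
    set K₂ : Set (Fin N) := {k | ∃ z, (y, z, k) ∈ M} with hK₂
    have hfinE : ∀ w : X, {z | (z, w) ∈ E}.Finite := hfin
    have hKcard : ∀ (w : X) (K : Set (Fin N)), K = {k | ∃ z, (w, z, k) ∈ M} →
        K.ncard ≤ m := by
      intro w K hK
      have hle : K.ncard ≤ ({z | (z, w) ∈ E}).ncard := by
        refine Set.ncard_le_ncard_of_injOn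
          (fun k => if h : ∃ z, (w, z, k) ∈ M then h.choose else w) ?_ ?_ (hfinE w)
        · intro k hk
          rw [hK] at hk
          have hk' : ∃ z, (w, z, k) ∈ M := hk
          simp only [Set.mem_setOf_eq, dif_pos hk']
          exact hsym _ (hMa _ hk'.choose_spec).1
        · intro k hk k' hk2 heq
          rw [hK] at hk hk2
          have hk' : ∃ z, (w, z, k) ∈ M := hk
          have hk2' : ∃ z, (w, z, k') ∈ M := hk2
          simp only [dif_pos hk', dif_pos hk2'] at heq
          have h1 := hk'.choose_spec
          have h2 := hk2'.choose_spec
          rw [heq] at h1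
          exact hMd w _ k k' h1 h2
      exact le_trans hle (hcard w)
    have h1 : K₁.ncard ≤ m := hKcard x K₁ hK₁
    have h2 : K₂.ncard ≤ m := hKcard y K₂ hK₂
    -- find a fresh color
    have hfresh : ∃ k : Fin N, k ∉ K₁ ∪ K₂ := by
      by_contra hall
      push_neg at hall
      have huniv : (Set.univ : Set (Fin N)) ⊆ K₁ ∪ K₂ := fun k _ => hall k
      have : N ≤ (K₁ ∪ K₂).ncard := by
        calc N = (Set.univ : Set (Fin N)).ncard := by
                simp [Set.ncard_univ]
          _ ≤ (K₁ ∪ K₂).ncard := Set.ncard_le_ncard huniv (Set.toFinite _)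
      have hle2 : (K₁ ∪ K₂).ncard ≤ K₁.ncard + K₂.ncard := Set.ncard_union_le _ _
      omega
    obtain ⟨k₀, hk₀⟩ := hfresh
    have hk₀1 : k₀ ∉ K₁ := fun h => hk₀ (Or.inl h)
    have hk₀2 : k₀ ∉ K₂ := fun h => hk₀ (Or.inr h)
    -- extend the coloring
    set M' : Set (X × X × Fin N) := insert (x, y, k₀) (insert (y, x, k₀) M) with hM'
    have hM'𝒞 : M' ∈ 𝒞 := by
      refine ⟨?_, ?_, ?_, ?_⟩
      · rintro t (rfl | rfl | ht)
        · exact ⟨hxy, hne⟩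
        · exact ⟨hsym _ hxy, Ne.symm hne⟩
        · exact hMa t ht
      · rintro t (rfl | rfl | ht)
        · exact Or.inr (Or.inl rfl)
        · exact Or.inl rfl
        · exact Or.inr (Or.inr (hMb t ht))
      · intro a b b' k h h'
        simp only [hM', Set.mem_insert_iff, Prod.mk.injEq] at h h'
        rcases h with ⟨rfl, rfl, rfl⟩ | ⟨rfl, rfl, rfl⟩ | h
        · rcases h' with ⟨-, rfl, -⟩ | ⟨hxy', -, -⟩ | h'
          · rfl
          · exact absurd hxy' hne
          · exact absurd ⟨b', h'⟩ hk₀1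
        · rcases h' with ⟨hxy', -, -⟩ | ⟨-, rfl, -⟩ | h'
          · exact absurd hxy'.symm hne
          · rfl
          · exact absurd ⟨b', h'⟩ hk₀2
        · rcases h' with ⟨rfl, rfl, rfl⟩ | ⟨rfl, rfl, rfl⟩ | h'
          · exact absurd ⟨b, h⟩ hk₀1
          · exact absurd ⟨b, h⟩ hk₀2
          · exact hMc _ _ _ _ h h'
      · intro a b k k' h h'
        simp only [hM', Set.mem_insert_iff, Prod.mk.injEq] at h h'
        rcases h with ⟨rfl, rfl, rfl⟩ | ⟨rfl, rfl, rfl⟩ | h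
        · rcases h' with ⟨-, -, rfl⟩ | ⟨hxy', -, -⟩ | h'
          · rfl
          · exact absurd hxy' hne
          · exact absurd h' (hno k')
        · rcases h' with ⟨hxy', -, -⟩ | ⟨-, -, rfl⟩ | h'
          · exact absurd hxy'.symm hne
          · rfl
          · exact absurd (hMb _ h') (hno k')
        · rcases h' with ⟨rfl, rfl, rfl⟩ | ⟨rfl, rfl, rfl⟩ | h'
          · exact absurd h (hno k)
          · exact absurd (hMb _ h) (hno k)
          · exact hMd _ _ _ _ h h'
    have hsub : M ⊆ M' := fun t ht => Or.inr (Or.inr ht)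
    have := hM.2 hM'𝒞 hsub (Or.inl rfl)
    exact hno k₀ this
  -- define the involutions
  have hinvol : ∀ k : Fin N, Function.Involutive
      (fun x : X => if h : ∃ z, (x, z, k) ∈ M then h.choose else x) := by
    intro k x
    by_cases h : ∃ z, (x, z, k) ∈ M
    · simp only [dif_pos h]
      have hx : (x, h.choose, k) ∈ M := h.choose_spec
      have hy : (h.choose, x, k) ∈ M := hMb _ hx
      have h' : ∃ z, (h.choose, z, k) ∈ M := ⟨x, hy⟩
      rw [dif_pos h']
      exact hMc _ _ _ _ h'.choose_spec hy
    · simp only [dif_neg h]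
  refine ⟨fun k => (hinvol k).toPerm _, ?_, ?_⟩
  · intro k y
    by_cases h : ∃ z, (y, z, k) ∈ M
    · right
      have : ((hinvol k).toPerm _) y = h.choose := by
        simp [Function.Involutive.toPerm, dif_pos h]
      rw [this]
      have hy : (y, h.choose, k) ∈ M := h.choose_spec
      exact hsym _ (hMa _ hy).1
    · left
      simp [Function.Involutive.toPerm, dif_neg h]
  · rintro ⟨a, b⟩ hab
    by_cases hne : a = b
    · exact Or.inl hne
    right
    obtain ⟨k, hk⟩ := htotal a b hab hne
    refine ⟨k, ?_⟩
    have hb : (b, a, k) ∈ M := hMb _ hk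
    have h : ∃ z, (b, z, k) ∈ M := ⟨a, hb⟩
    have : ((hinvol k).toPerm _) b = h.choose := by
      simp [Function.Involutive.toPerm, dif_pos h]
    rw [this]
    exact hMc _ _ _ _ h.choose_spec hb

/-- a uniformly locally finite coarse structure generated by a single
entourage is the Schreier coarse structure of the action of a finitely generated group
of permutations of `X`. -/
theorem singly_generated_ulf_coarse_space_is_schreier_of_fg {X : Type*}
    (𝓔 : Set (Set (X × X))) (h𝓔 : IsCoarseStructure 𝓔)
    (hulf : ∀ S ∈ 𝓔, ∃ m : ℕ, ∀ x : X,
      {y | (y, x) ∈ S}.Finite ∧ {y | (y, x) ∈ S}.ncard ≤ m)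
    (E₀ : Set (X × X)) (hE₀ : E₀ ∈ 𝓔)
    (hgen : ∀ 𝓕 : Set (Set (X × X)), IsCoarseStructure 𝓕 → E₀ ∈ 𝓕 → 𝓔 ⊆ 𝓕) :
    ∃ T : Finset (Equiv.Perm X),
      (∀ g ∈ Subgroup.closure (T : Set (Equiv.Perm X)), {p : X × X | p.1 = g p.2} ∈ 𝓔) ∧
      (∀ 𝓕 : Set (Set (X × X)), IsCoarseStructure 𝓕 →
        (∀ g ∈ Subgroup.closure (T : Set (Equiv.Perm X)),
          {p : X × X | p.1 = g p.2} ∈ 𝓕) → 𝓔 ⊆ 𝓕) := by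
  classical
  obtain ⟨hdown, hdir, hdiag, hcomp, hinv⟩ := h𝓔
  -- the symmetrized entourage containing the diagonal
  set Es : Set (X × X) :=
    E₀ ∪ {p : X × X | (p.2, p.1) ∈ E₀} ∪ {p : X × X | p.1 = p.2} with hEsdef
  have hEs𝓔 : Es ∈ 𝓔 :=
    IsCoarseStructure.union_mem ⟨hdown, hdir, hdiag, hcomp, hinv⟩
      (IsCoarseStructure.union_mem ⟨hdown, hdir, hdiag, hcomp, hinv⟩ hE₀ (hinv E₀ hE₀)) hdiag
  have hEssym : ∀ p ∈ Es, (p.2, p.1) ∈ Es := by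
    rintro ⟨a, b⟩ ((h | h) | h)
    · exact Or.inl (Or.inr h)
    · exact Or.inl (Or.inl h)
    · exact Or.inr h.symm
  obtain ⟨m, hm⟩ := hulf Es hEs𝓔
  obtain ⟨π, hπgraph, hπcover⟩ :=
    exists_perms_covering Es hEssym m (fun x => (hm x).1) (fun x => (hm x).2)
  set T : Finset (Equiv.Perm X) := Finset.image π Finset.univ with hT
  have hgraphπ : ∀ k, {p : X × X | p.1 = (π k) p.2} ∈ 𝓔 := by
    intro k
    apply hdown Es hEs𝓔
    rintro ⟨a, b⟩ (h : a = (π k) b)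
    rcases hπgraph k b with heq | hmem
    · exact Or.inr (h.trans heq)
    · rw [h]; exact hmem
  refine ⟨T, ?_, ?_⟩
  · -- graphs of all elements of the closure are in 𝓔
    intro g hg
    induction hg using Subgroup.closure_induction with
    | mem x hx =>
      obtain ⟨k, -, rfl⟩ := Finset.mem_image.1 (Finset.mem_coe.1 hx)
      exact hgraphπ k
    | one =>
      have : {p : X × X | p.1 = (1 : Equiv.Perm X) p.2} = {p : X × X | p.1 = p.2} := by
        ext p; simp
      rw [this]; exact hdiag
    | mul x y hx hy ihx ihy =>
      apply hdown _ (hcomp _ ihx _ ihy)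
      rintro ⟨a, b⟩ (h : a = (x * y) b)
      exact ⟨y b, h, rfl⟩
    | inv x hx ihx =>
      apply hdown _ (hinv _ ihx)
      rintro ⟨a, b⟩ (h : a = x⁻¹ b)
      show b = x a
      rw [h]; simp
  · -- minimality
    intro 𝓕 h𝓕 hgraphs
    apply hgen 𝓕 h𝓕
    have hid : {p : X × X | p.1 = p.2} ∈ 𝓕 := by
      have h1 := hgraphs 1 (one_mem _)
      have : {p : X × X | p.1 = (1 : Equiv.Perm X) p.2} = {p : X × X | p.1 = p.2} := by
        ext p; simp
      rwa [this] at h1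
    have hπ𝓕 : ∀ k, {p : X × X | p.1 = (π k) p.2} ∈ 𝓕 := by
      intro k
      exact hgraphs (π k) (Subgroup.subset_closure
        (Finset.mem_coe.2 (Finset.mem_image_of_mem π (Finset.mem_univ k))))
    have hU : ({p : X × X | p.1 = p.2} ∪
        ⋃ k ∈ (Finset.univ : Finset (Fin (2 * m + 1))),
          {p : X × X | p.1 = (π k) p.2}) ∈ 𝓕 :=
      h𝓕.union_mem hid (h𝓕.biUnion_mem Finset.univ _ fun k _ => hπ𝓕 k)
    apply h𝓕.1 _ hU
    intro p hp
    have hpEs : p ∈ Es := Or.inl (Or.inl hp)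
    rcases hπcover p hpEs with heq | ⟨k, hk⟩
    · exact Or.inl heq
    · exact Or.inr (Set.mem_biUnion (Finset.mem_univ k) hk.symm)
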